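/- Let (G, L) be a rational structure. If H, K ≤ G are L-quasi-convex subgroups, then the intersection H ∩ K is L-quasi-convex (and hence finitely generated). -/
import Mathlib


open List

/-- A word over the alphabet Ã = A ∪ A⁻¹ is a `List (A × Bool)`: the letter `(a, true)`
stands for `a` and `(a, false)` for the formal inverse `a⁻¹`. A word is *reduced* if it
has no factor `a·a⁻¹` or `a⁻¹·a`. -/
def Reduced {A : Type*} (w : List (A × Bool)) : Prop :=
  w.Chain' fun p q => ¬(p.1 = q.1 ∧ q.2 = !p.2)

variable {A : Type*} [Fintype A] {G : Type*} [Group G]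

/-- Evaluation in `G` of a word over Ã, determined by the images `f a` of the letters.
This is the (inverse-respecting) monoid homomorphism μ : Ã* → G. -/
def eval (f : A → G) (w : List (A × Bool)) : G :=
  (w.map fun p => if p.2 then f p.1 else (f p.1)⁻¹).prod

/-- Word length of `g ∈ G` with respect to the generators `A`:
the least length of a word over Ã mapping onto `g`. -/
noncomputable def wlen (f : A → G) (g : G) : ℕ :=
  sInf {n | ∃ w : List (A × Bool), eval f w = g ∧ w.length = n}

/-- A rational structure: `L` is a regular language of reduced words with μ(L) = G. -/
def RationalStructure (f : A → G) (L : Set (List (A × Bool))) : Prop :=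
  Language.IsRegular (L : Language (A × Bool)) ∧ (∀ w ∈ L, Reduced w) ∧
    ∀ g : G, ∃ w ∈ L, eval f w = g

/-- `H` is L-quasi-convex with constant `k`: for every `w ∈ L` with `μ(w) ∈ H` and
every prefix `u` of `w`, there is `h ∈ H` with `|h⁻¹ μ(u)| ≤ k`. -/
def QCW (f : A → G) (L : Set (List (A × Bool))) (H : Subgroup G) (k : ℕ) : Prop :=
  ∀ w ∈ L, eval f w ∈ H → ∀ u, u <+: w → ∃ h ∈ H, wlen f (h⁻¹ * eval f u) ≤ k

/-- The set of right cosets `H·μ(u)` where `u` ranges over prefixes of words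
`w ∈ L` with `μ(w) ∈ H` (the vertex set of the Stallings graph Γ_L(H)). -/
def VL (f : A → G) (L : Set (List (A × Bool))) (H : Subgroup G) : Set (Set G) :=
  {S | ∃ w ∈ L, eval f w ∈ H ∧ ∃ u, u <+: w ∧ S = {x | ∃ h ∈ H, x = h * eval f u}}

set_option linter.unusedSectionVars false

lemma eval_nil (f : A → G) : eval f [] = 1 := rfl

lemma eval_append (f : A → G) (u v : List (A × Bool)) :
    eval f (u ++ v) = eval f u * eval f v := by
  simp [eval]

lemma eval_inv_word (f : A → G) (w : List (A × Bool)) :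
    eval f ((w.map fun p => (p.1, !p.2)).reverse) = (eval f w)⁻¹ := by
  induction w with
  | nil => simp [eval]
  | cons p w ih =>
    cases p with
    | mk a b =>
      cases b <;> simp_all [eval, eval_append]

lemma wlen_le_iff (f : A → G) (hgen : ∀ g : G, ∃ w, eval f w = g) (g : G) (n : ℕ) :
    wlen f g ≤ n ↔ ∃ w : List (A × Bool), eval f w = g ∧ w.length ≤ n := by
  constructor
  · intro h
    have hne : {m | ∃ w : List (A × Bool), eval f w = g ∧ w.length = m}.Nonempty := by
      obtain ⟨w, hw⟩ := hgen g
      exact ⟨w.length, w, hw, rfl⟩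
    obtain ⟨w, hw, hl⟩ := Nat.sInf_mem hne
    exact ⟨w, hw, hl ▸ h⟩
  · rintro ⟨w, hw, hl⟩
    exact le_trans (Nat.sInf_le ⟨w, hw, rfl⟩) hl

lemma wlen_one (f : A → G) : wlen f 1 = 0 :=
  Nat.le_zero.mp (Nat.sInf_le ⟨[], rfl, rfl⟩)

lemma wlen_mul (f : A → G) (hgen : ∀ g : G, ∃ w, eval f w = g) (x y : G) :
    wlen f (x * y) ≤ wlen f x + wlen f y := by
  obtain ⟨wx, hx, hlx⟩ := (wlen_le_iff f hgen x _).mp le_rfl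
  obtain ⟨wy, hy, hly⟩ := (wlen_le_iff f hgen y _).mp le_rfl
  exact (wlen_le_iff f hgen _ _).mpr ⟨wx ++ wy, by simp [eval_append, hx, hy],
    by simpa using Nat.add_le_add hlx hly⟩

lemma wlen_inv (f : A → G) (hgen : ∀ g : G, ∃ w, eval f w = g) (x : G) :
    wlen f x⁻¹ ≤ wlen f x := by
  obtain ⟨wx, hx, hlx⟩ := (wlen_le_iff f hgen x _).mp le_rfl
  exact (wlen_le_iff f hgen _ _).mpr ⟨(wx.map fun p => (p.1, !p.2)).reverse,
    by rw [eval_inv_word, hx], by simpa using hlx⟩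

lemma ball_finite (f : A → G) (hgen : ∀ g : G, ∃ w, eval f w = g) (n : ℕ) :
    {g : G | wlen f g ≤ n}.Finite := by
  have : {g : G | wlen f g ≤ n} ⊆ eval f '' {w | w.length ≤ n} := by
    intro g hg
    obtain ⟨w, hw, hl⟩ := (wlen_le_iff f hgen g _).mp hg
    exact ⟨w, hl, hw⟩
  exact ((List.finite_length_le (A × Bool) n).image _).subset this

set_option linter.unusedSectionVars false

/-- Cosets based at nearby points coincide. -/
lemma coset_eq (H : Subgroup G) {h : G} (hh : h ∈ H) (a : G) :
    {x : G | ∃ h' ∈ H, x = h' * a} = {x : G | ∃ h' ∈ H, x = h' * (h⁻¹ * a)} := by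
  ext x
  constructor
  · rintro ⟨h', hh', rfl⟩
    exact ⟨h' * h, H.mul_mem hh' hh, by group⟩
  · rintro ⟨h', hh', rfl⟩
    exact ⟨h' * h⁻¹, H.mul_mem hh' (H.inv_mem hh), by group⟩

lemma vl_finite_of_qcw (f : A → G) (hgen : ∀ g : G, ∃ w, eval f w = g)
    (L : Set (List (A × Bool))) (H : Subgroup G) (k : ℕ) (hq : QCW f L H k) :
    (VL f L H).Finite := by
  have hsub : VL f L H ⊆ (fun a : G => {x | ∃ h ∈ H, x = h * a}) '' {g | wlen f g ≤ k} := by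
    rintro S ⟨w, hw, hwH, u, hu, rfl⟩
    obtain ⟨h, hh, hlen⟩ := hq w hw hwH u hu
    exact ⟨h⁻¹ * eval f u, hlen, (coset_eq H hh (eval f u)).symm⟩
  exact (((ball_finite f hgen k).image _)).subset hsub

/-- From finiteness of `VL` to quasi-convexity. -/
lemma qcw_of_vl_finite (f : A → G) (L : Set (List (A × Bool))) (H : Subgroup G)
    (hfin : (VL f L H).Finite) : ∃ k, QCW f L H k := by
  classical
  refine ⟨hfin.toFinset.sup (fun S => sInf (wlen f '' S)), ?_⟩
  intro w hw hwH u hu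
  set S : Set G := {x | ∃ h ∈ H, x = h * eval f u} with hS
  have hSVL : S ∈ VL f L H := ⟨w, hw, hwH, u, hu, rfl⟩
  have hne : (wlen f '' S).Nonempty := ⟨wlen f (eval f u), eval f u, ⟨1, H.one_mem, (one_mul _).symm⟩, rfl⟩
  obtain ⟨g, hgS, hgv⟩ := Nat.sInf_mem hne
  obtain ⟨h, hh, rfl⟩ := hgS
  refine ⟨h⁻¹, H.inv_mem hh, ?_⟩
  rw [inv_inv, hgv]
  exact Finset.le_sup (f := fun S => sInf (wlen f '' S)) (hfin.mem_toFinset.mpr hSVL)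

/-- VL of intersection is finite. -/
lemma vl_inter_finite (f : A → G) (L : Set (List (A × Bool))) (H K : Subgroup G)
    (hH : (VL f L H).Finite) (hK : (VL f L K).Finite) :
    (VL f L (H ⊓ K)).Finite := by
  classical
  set F : Set G → Set G × Set G :=
    fun S => ({x | ∃ h ∈ H, ∃ s ∈ S, x = h * s}, {x | ∃ h ∈ K, ∃ s ∈ S, x = h * s}) with hF
  have key : ∀ a : G, ∀ J : Subgroup G, (H ⊓ K : Subgroup G) ≤ J →
      {x : G | ∃ h ∈ J, ∃ s ∈ {x : G | ∃ h' ∈ H ⊓ K, x = h' * a}, x = h * s}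
        = {x : G | ∃ h ∈ J, x = h * a} := by
    intro a J hJ
    ext x
    constructor
    · rintro ⟨h, hh, s, ⟨h', hh', rfl⟩, rfl⟩
      exact ⟨h * h', J.mul_mem hh (hJ hh'), (mul_assoc _ _ _).symm⟩
    · rintro ⟨h, hh, rfl⟩
      exact ⟨h, hh, a, ⟨1, Subgroup.one_mem _, (one_mul _).symm⟩, rfl⟩
  have hmaps : ∀ S ∈ VL f L (H ⊓ K), F S ∈ (VL f L H) ×ˢ (VL f L K) := by
    rintro S ⟨w, hw, hwHK, u, hu, rfl⟩
    exact ⟨⟨w, hw, hwHK.1, u, hu, key (eval f u) H inf_le_left⟩,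
      ⟨w, hw, hwHK.2, u, hu, key (eval f u) K inf_le_right⟩⟩
  have hinj : Set.InjOn F (VL f L (H ⊓ K)) := by
    rintro S ⟨w, hw, hwHK, u, hu, rfl⟩ S' ⟨w', hw', hwHK', u', hu', rfl⟩ hFeq
    have h1 : {x : G | ∃ h ∈ H, x = h * eval f u} = {x : G | ∃ h ∈ H, x = h * eval f u'} :=
      (key (eval f u) H inf_le_left).symm.trans
        ((congrArg Prod.fst hFeq).trans (key (eval f u') H inf_le_left))
    have h2 : {x : G | ∃ h ∈ K, x = h * eval f u} = {x : G | ∃ h ∈ K, x = h * eval f u'} :=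
      (key (eval f u) K inf_le_right).symm.trans
        ((congrArg Prod.snd hFeq).trans (key (eval f u') K inf_le_right))
    have huH : ∃ h ∈ H, eval f u = h * eval f u' := by
      have : eval f u ∈ {x : G | ∃ h ∈ H, x = h * eval f u} := ⟨1, H.one_mem, (one_mul _).symm⟩
      rw [h1] at this; exact this
    have huK : ∃ h ∈ K, eval f u = h * eval f u' := by
      have : eval f u ∈ {x : G | ∃ h ∈ K, x = h * eval f u} := ⟨1, K.one_mem, (one_mul _).symm⟩
      rw [h2] at this; exact this
    obtain ⟨h1', hh1, he1⟩ := huH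
    obtain ⟨h2', hh2, he2⟩ := huK
    have hsame : h1' = h2' := by
      have := he1.symm.trans he2
      exact mul_right_cancel this
    have hHK : h1' ∈ H ⊓ K := ⟨hh1, hsame ▸ hh2⟩
    ext x
    constructor
    · rintro ⟨h, hh, rfl⟩
      exact ⟨h * h1', Subgroup.mul_mem _ hh hHK, by rw [he1]; group⟩
    · rintro ⟨h, hh, rfl⟩
      refine ⟨h * h1'⁻¹, Subgroup.mul_mem _ hh (Subgroup.inv_mem _ hHK), ?_⟩
      rw [he1]; group
  exact Set.Finite.of_finite_image ((hH.prod hK).subset (Set.image_subset_iff.mpr hmaps)) hinj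

lemma wlen_eval_le (f : A → G) (w : List (A × Bool)) : wlen f (eval f w) ≤ w.length :=
  Nat.sInf_le ⟨w, rfl, rfl⟩

lemma fg_of_qcw (f : A → G) (L : Set (List (A × Bool)))
    (hgenL : ∀ g : G, ∃ w ∈ L, eval f w = g) (H' : Subgroup G) (k : ℕ)
    (hq : QCW f L H' k) : H'.FG := by
  have hgen : ∀ g : G, ∃ w, eval f w = g := fun g => by
    obtain ⟨w, _, hw⟩ := hgenL g; exact ⟨w, hw⟩
  set Sgen : Set G := {g | g ∈ H' ∧ wlen f g ≤ 2 * k + 1} with hSgen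
  rw [Subgroup.fg_iff]
  refine ⟨Sgen, ?_, (ball_finite f hgen (2 * k + 1)).subset fun g hg => hg.2⟩
  apply _root_.le_antisymm
  · exact (Subgroup.closure_le _).mpr fun g hg => hg.1
  · intro g hg
    obtain ⟨w, hwL, hwg⟩ := hgenL g
    have hwH : eval f w ∈ H' := hwg ▸ hg
    have main : ∀ i, ∃ h, h ∈ H' ∧ h ∈ Subgroup.closure Sgen ∧
        wlen f (h⁻¹ * eval f (w.take i)) ≤ k := by
      intro i
      induction i with
      | zero =>
        refine ⟨1, H'.one_mem, Subgroup.one_mem _, ?_⟩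
        simp [eval_nil, wlen_one]
      | succ i ih =>
        obtain ⟨h, hhH, hhcl, hhlen⟩ := ih
        obtain ⟨h', hh'H, hh'len⟩ := hq w hwL hwH (w.take (i + 1)) (List.take_prefix _ _)
        have hsplit : eval f (w.take (i + 1)) = eval f (w.take i) * eval f (w[i]?.toList) := by
          rw [List.take_succ, eval_append]
        have hmid : wlen f (eval f (w[i]?.toList)) ≤ 1 := by
          refine le_trans (wlen_eval_le f _) ?_
          cases w[i]? <;> simp
        have hdec : h⁻¹ * h' =
            (h⁻¹ * eval f (w.take i)) * eval f (w[i]?.toList) *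
              (h'⁻¹ * eval f (w.take (i + 1)))⁻¹ := by
          rw [hsplit]; group
        have hwl : wlen f (h⁻¹ * h') ≤ 2 * k + 1 := by
          rw [hdec]
          calc wlen f ((h⁻¹ * eval f (w.take i)) * eval f (w[i]?.toList) *
              (h'⁻¹ * eval f (w.take (i + 1)))⁻¹)
              ≤ wlen f ((h⁻¹ * eval f (w.take i)) * eval f (w[i]?.toList)) +
                wlen f ((h'⁻¹ * eval f (w.take (i + 1)))⁻¹) := wlen_mul f hgen _ _
            _ ≤ (wlen f (h⁻¹ * eval f (w.take i)) + wlen f (eval f (w[i]?.toList))) +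
                wlen f (h'⁻¹ * eval f (w.take (i + 1))) :=
                Nat.add_le_add (wlen_mul f hgen _ _) (wlen_inv f hgen _)
            _ ≤ (k + 1) + k := Nat.add_le_add (Nat.add_le_add hhlen hmid) hh'len
            _ = 2 * k + 1 := by ring
        have hmem : h⁻¹ * h' ∈ Sgen := ⟨H'.mul_mem (H'.inv_mem hhH) hh'H, hwl⟩
        refine ⟨h', hh'H, ?_, hh'len⟩
        have : h' = h * (h⁻¹ * h') := by group
        rw [this]
        exact Subgroup.mul_mem _ hhcl (Subgroup.subset_closure hmem)
    obtain ⟨h, hhH, hhcl, hhlen⟩ := main w.length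
    rw [List.take_length, hwg] at hhlen
    have hmem : h⁻¹ * g ∈ Sgen :=
      ⟨H'.mul_mem (H'.inv_mem hhH) hg, le_trans hhlen (by omega)⟩
    have : g = h * (h⁻¹ * g) := by group
    rw [this]
    exact Subgroup.mul_mem _ hhcl (Subgroup.subset_closure hmem)


/-- the intersection of two L-quasi-convex subgroups is L-quasi-convex
(and hence finitely generated). -/
theorem stmt5 (f : A → G) (L : Set (List (A × Bool))) (H K : Subgroup G)
    (hL : RationalStructure f L)
    (hH : ∃ k, QCW f L H k) (hK : ∃ k, QCW f L K k) :
    (∃ k, QCW f L (H ⊓ K) k) ∧ (H ⊓ K).FG := by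
  have hgenL : ∀ g : G, ∃ w ∈ L, eval f w = g := hL.2.2
  have hgen : ∀ g : G, ∃ w, eval f w = g := fun g => by
    obtain ⟨w, _, hw⟩ := hgenL g; exact ⟨w, hw⟩
  obtain ⟨k1, hq1⟩ := hH
  obtain ⟨k2, hq2⟩ := hK
  have hfin : (VL f L (H ⊓ K)).Finite :=
    vl_inter_finite f L H K (vl_finite_of_qcw f hgen L H k1 hq1)
      (vl_finite_of_qcw f hgen L K k2 hq2)
  have hqcw := qcw_of_vl_finite f L (H ⊓ K) hfin
  obtain ⟨k, hk⟩ := hqcw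
  exact ⟨⟨k, hk⟩, fg_of_qcw f L hgenL (H ⊓ K) k hk⟩
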